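/- The cocycle identity \phi_1([d^1_m, d^1_n], d_r) + \phi_1([d^1_n, d_r], d^1_m) + \phi_1([d_r, d^1_m], d^1_n) = 0 holds for all integers m, n, r, using the brackets [d^1_m,d^1_n]=(n-m)d_{m+n-1}, [d^1_n,d_r] = -[d_r,d^1_n] = -((n-r-1)d^1_{r+n+1} + (4n-4r-2)d^1_{r+n}) and the given formulas for \phi_1. -/

import Mathlib

/-- `φ₁(d_k, d_l) = l(l+1)(l+2)δ_{k+l,-2} + 4l(2l+1)(l+1)δ_{k+l,-1}
    + 4l(2l-1)(2l+1)δ_{k+l,0}`. -/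
noncomputable def phidd (k l : ℤ) : ℂ :=
  (if k + l = -2 then (l : ℂ) * (l + 1) * (l + 2) else 0) +
    (if k + l = -1 then 4 * (l : ℂ) * (2 * l + 1) * (l + 1) else 0) +
      (if k + l = 0 then 4 * (l : ℂ) * (2 * l - 1) * (2 * l + 1) else 0)

/-- `φ₁(d¹_k, d¹_l) = 2(l²-l)(2l-1)δ_{k+l,1} + (l³-l)δ_{k+l,0}`. -/
noncomputable def phi11 (k l : ℤ) : ℂ :=
  (if k + l = 1 then 2 * ((l : ℂ) ^ 2 - l) * (2 * l - 1) else 0) +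
    (if k + l = 0 then (l : ℂ) ^ 3 - l else 0)

/-!
Every term of the identity is supported on a hyperplane `m + n + r = c`: the `d`–`d` term needs
`c ∈ {-1, 0, 1}` and the `d¹`–`d¹` terms need `c ∈ {-1, 0}` or `c ∈ {0, 1}`. Writing
`r = c - m - n`, each of the three nontrivial hyperplanes leaves a polynomial identity in `m, n`,
and off them every term vanishes.
-/

section Evaluation

variable {k l : ℤ}

theorem phidd_of_add_eq_neg_two (h : k + l = -2) : phidd k l = l * (l + 1) * (l + 2) := by
  simp [phidd, h]

theorem phidd_of_add_eq_neg_one (h : k + l = -1) :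
    phidd k l = 4 * l * (2 * l + 1) * (l + 1) := by
  simp [phidd, h]

theorem phidd_of_add_eq_zero (h : k + l = 0) :
    phidd k l = 4 * l * (2 * l - 1) * (2 * l + 1) := by
  simp [phidd, h]

theorem phidd_eq_zero (h₂ : k + l ≠ -2) (h₁ : k + l ≠ -1) (h₀ : k + l ≠ 0) : phidd k l = 0 := by
  simp [phidd, h₂, h₁, h₀]

theorem phi11_of_add_eq_one (h : k + l = 1) : phi11 k l = 2 * ((l : ℂ) ^ 2 - l) * (2 * l - 1) := by
  simp [phi11, h]

theorem phi11_of_add_eq_zero (h : k + l = 0) : phi11 k l = (l : ℂ) ^ 3 - l := by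
  simp [phi11, h]

theorem phi11_eq_zero (h₁ : k + l ≠ 1) (h₀ : k + l ≠ 0) : phi11 k l = 0 := by
  simp [phi11, h₁, h₀]

end Evaluation

/-- the cocycle identity
`φ₁([d¹_m,d¹_n],d_r) + φ₁([d¹_n,d_r],d¹_m) + φ₁([d_r,d¹_m],d¹_n) = 0`,
expanded via the brackets `[d¹_m,d¹_n] = (n-m)d_{m+n-1}` and
`[d¹_n,d_r] = -[d_r,d¹_n] = -((n-r-1)d¹_{r+n+1} + (4n-4r-2)d¹_{r+n})`. -/
theorem phi1_cocycle_d1_d1_d (m n r : ℤ) :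
    ((n : ℂ) - m) * phidd (m + n - 1) r
      - (((n : ℂ) - r - 1) * phi11 (r + n + 1) m +
          (4 * (n : ℂ) - 4 * r - 2) * phi11 (r + n) m)
      + (((m : ℂ) - r - 1) * phi11 (r + m + 1) n +
          (4 * (m : ℂ) - 4 * r - 2) * phi11 (r + m) n) = 0 := by
  obtain ⟨c, rfl⟩ : ∃ c, r = c - m - n := ⟨m + n + r, by ring⟩
  obtain rfl | rfl | rfl | hc : c = -1 ∨ c = 0 ∨ c = 1 ∨ (c ≠ -1 ∧ c ≠ 0 ∧ c ≠ 1) := by omega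
  all_goals
    simp (disch := omega) only [phidd_of_add_eq_neg_two, phidd_of_add_eq_neg_one,
      phidd_of_add_eq_zero, phidd_eq_zero, phi11_of_add_eq_one, phi11_of_add_eq_zero,
      phi11_eq_zero]
    push_cast
    ring
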